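/- arXiv:1608.00160 — 4 statements merged into one kernel-verified Lean document; each statement's English description precedes it below -/
import Mathlib

section
/- Suppose ρ : [a,b] → (0,∞) is continuous, differentiable on (a,b), satisfies r²ρ̇² + ω²/ρ² − ρ² = c on (a,b) with ω ≠ 0, and ρ̇ ≥ 0. If ρ̇(r̄) = 0 for some r̄ ∈ (a,b] and ρ̇ > 0 on (r̄−δ, r̄) for some δ > 0, then a contradiction follows; i.e., ρ̇ cannot vanish at the right endpoint of an interval where it is strictly positive. -/
open Set

/-! Along a solution, `z = ρ² − ω²/ρ² + c = r²ρ̇²` is nonnegative and vanishes where `ρ̇`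
does. Since `x ↦ x² − ω²/x²` is strictly increasing on `(0, ∞)` and `ρ` is strictly
increasing on `[r₁, r₀]` for any `r₁ ∈ (r₀ − δ, r₀)`, `z` would be negative at `r₁`. -/

theorem strictMonoOn_sq_sub_div_sq {k : ℝ} (hk : 0 ≤ k) :
    StrictMonoOn (fun x : ℝ => x ^ 2 - k / x ^ 2) (Ioi 0) := by
  intro x hx y _ hxy
  have hx2 : 0 < x ^ 2 := pow_pos hx 2
  have hsq : x ^ 2 < y ^ 2 := pow_lt_pow_left₀ hxy hx.le two_ne_zero
  have hdiv : k / y ^ 2 ≤ k / x ^ 2 := div_le_div_of_nonneg_left hk hx2 hsq.le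
  show x ^ 2 - k / x ^ 2 < y ^ 2 - k / y ^ 2
  linarith

theorem deriv_cannot_vanish_at_right_endpoint_general (a b c ω r₀ δ : ℝ) (ρ : ℝ → ℝ)
    (hcont : ContinuousOn ρ (Set.Icc a b))
    (hpos : ∀ r ∈ Set.Icc a b, 0 < ρ r)
    (hode : ∀ r ∈ Set.Ioc a b,
      r ^ 2 * (deriv ρ r) ^ 2 + ω ^ 2 / (ρ r) ^ 2 - (ρ r) ^ 2 = c)
    (hr₀ : r₀ ∈ Set.Ioc a b) (hzero : deriv ρ r₀ = 0)
    (hδ : 0 < δ) (hsub : Set.Ioo (r₀ - δ) r₀ ⊆ Set.Ioc a b)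
    (hstrict : ∀ r ∈ Set.Ioo (r₀ - δ) r₀, 0 < deriv ρ r) :
    False := by
  obtain ⟨r₁, hr₁⟩ : (Ioo (r₀ - δ) r₀).Nonempty := nonempty_Ioo.2 (by linarith)
  have hr₁ab : r₁ ∈ Ioc a b := hsub hr₁
  have hIcc : Icc r₁ r₀ ⊆ Icc a b := Icc_subset_Icc hr₁ab.1.le hr₀.2
  have hρ_mono : StrictMonoOn ρ (Icc r₁ r₀) := by
    refine strictMonoOn_of_deriv_pos (convex_Icc r₁ r₀) (hcont.mono hIcc) fun r hr => ?_
    rw [interior_Icc] at hr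
    exact hstrict r ⟨hr₁.1.trans hr.1, hr.2⟩
  have hρ_lt : ρ r₁ < ρ r₀ :=
    hρ_mono (left_mem_Icc.2 hr₁.2.le) (right_mem_Icc.2 hr₁.2.le) hr₁.2
  have hz_lt : ρ r₁ ^ 2 - ω ^ 2 / ρ r₁ ^ 2 < ρ r₀ ^ 2 - ω ^ 2 / ρ r₀ ^ 2 :=
    strictMonoOn_sq_sub_div_sq (sq_nonneg ω)
      (hpos r₁ (Ioc_subset_Icc_self hr₁ab)) (hpos r₀ (Ioc_subset_Icc_self hr₀)) hρ_lt
  have hode₀ := hode r₀ hr₀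
  have hode₁ := hode r₁ hr₁ab
  have hz₁ : 0 ≤ r₁ ^ 2 * deriv ρ r₁ ^ 2 := by positivity
  rw [hzero] at hode₀
  linarith

/-- If `ρ > 0` solves `r²ρ̇² + ω²/ρ² − ρ² = c` with `ω ≠ 0` and `ρ̇ ≥ 0`, then `ρ̇`
cannot vanish at the right endpoint `r₀ ∈ (a,b]` of an interval `(r₀−δ, r₀)` on
which it is strictly positive. -/
theorem deriv_cannot_vanish_at_right_endpoint (a b c ω r₀ δ : ℝ) (ρ : ℝ → ℝ)
    (hab : a < b) (hω : ω ≠ 0)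
    (hcont : ContinuousOn ρ (Set.Icc a b))
    (hpos : ∀ r ∈ Set.Icc a b, 0 < ρ r)
    (hdiff : ∀ r ∈ Set.Ioc a b, DifferentiableAt ℝ ρ r)
    (hode : ∀ r ∈ Set.Ioc a b,
      r ^ 2 * (deriv ρ r) ^ 2 + ω ^ 2 / (ρ r) ^ 2 - (ρ r) ^ 2 = c)
    (hmono : ∀ r ∈ Set.Ioc a b, 0 ≤ deriv ρ r)
    (hr₀ : r₀ ∈ Set.Ioc a b) (hzero : deriv ρ r₀ = 0)
    (hδ : 0 < δ) (hsub : Set.Ioo (r₀ - δ) r₀ ⊆ Set.Ioc a b)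
    (hstrict : ∀ r ∈ Set.Ioo (r₀ - δ) r₀, 0 < deriv ρ r) :
    False :=
  deriv_cannot_vanish_at_right_endpoint_general a b c ω r₀ δ ρ hcont hpos hode hr₀ hzero hδ hsub
    hstrict
end

section
/- Let ρ, ψ be C² on (a,b) with ρ > 0, satisfying rρ²ψ̇ = ω with ω ≠ 0, and the Euler–Lagrange equation (rρ̇ + ρh₀'(d))' = ρ/r + rρψ̇² + ρ̇h₀'(d) where d = ρρ̇/r and h₀ is C² convex. Then d cannot have ḋ ≤ 0 at any point of (a,b); i.e., d is strictly monotonically increasing. -/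
/-!
Expanding the Euler–Lagrange equation by the chain rule and eliminating `ρ̈` with the formula
for `ḋ` gives the identity `ḋ · r (r² + ρ² h₀''(d)) = (ρ - r ρ̇)² + (r ρ ψ̇)²`. Its right-hand side
is positive because `r ρ² ψ̇ = ω ≠ 0`, and `h₀'' ≥ 0` by convexity, so `ḋ > 0`.
-/

open Set

theorem ConvexOn.deriv_deriv_nonneg {f : ℝ → ℝ} {s : Set ℝ} {x : ℝ} (hs : IsOpen s)
    (hf : ConvexOn ℝ s f) (hfd : DifferentiableOn ℝ f s) (hx : x ∈ s) :
    0 ≤ deriv (deriv f) x := by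
  rw [← derivWithin_of_isOpen hs hx]
  exact (hf.monotoneOn_deriv fun y hy ↦ hfd.differentiableAt (hs.mem_nhds hy)).derivWithin_nonneg

-- `p, q, q₂, w, H` stand for `ρ, ρ̇, ρ̈, ψ̇, h₀''(d)` at `r`; the first factor is `ḋ`.
theorem jacobian_deriv_mul_eq_sq_add_sq {r p q q₂ w H : ℝ} (hr : r ≠ 0)
    (hEL : q + r * q₂ + p * H * ((q ^ 2 + p * q₂) / r - p * q / r ^ 2) = p / r + r * p * w ^ 2) :
    ((q ^ 2 + p * q₂) / r - p * q / r ^ 2) * (r * (r ^ 2 + p ^ 2 * H))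
      = (p - r * q) ^ 2 + (r * p * w) ^ 2 := by
  field_simp at hEL ⊢
  linear_combination p * hEL

theorem deriv_jacobian_pos {ρ h₀ : ℝ → ℝ} {r w : ℝ} (hr : 0 < r) (hρr : 0 < ρ r) (hw : w ≠ 0)
    (hρ : DifferentiableAt ℝ ρ r) (hρ' : DifferentiableAt ℝ (deriv ρ) r)
    (hh₀' : DifferentiableAt ℝ (deriv h₀) (ρ r * deriv ρ r / r))
    (hH : 0 ≤ deriv (deriv h₀) (ρ r * deriv ρ r / r))
    (hEL : HasDerivAt (fun s => s * deriv ρ s + ρ s * deriv h₀ (ρ s * deriv ρ s / s))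
      (ρ r / r + r * ρ r * w ^ 2 + deriv ρ r * deriv h₀ (ρ r * deriv ρ r / r)) r) :
    0 < deriv (fun s => ρ s * deriv ρ s / s) r := by
  set p := ρ r
  set q := deriv ρ r
  set q₂ := deriv (deriv ρ) r
  set H := deriv (deriv h₀) (p * q / r)
  set D := (q ^ 2 + p * q₂) / r - p * q / r ^ 2
  have hd : HasDerivAt (fun s => ρ s * deriv ρ s / s) D r :=
    ((hρ.hasDerivAt.mul hρ'.hasDerivAt).div (hasDerivAt_id r) hr.ne').congr_deriv
      (by simp only [id, Pi.mul_apply, D]; field_simp; ring)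
  have hcomp : HasDerivAt (fun s => deriv h₀ (ρ s * deriv ρ s / s)) (H * D) r :=
    hh₀'.hasDerivAt.comp (h := fun s => ρ s * deriv ρ s / s) r hd
  have hG := ((hasDerivAt_id' r).mul hρ'.hasDerivAt).add (hρ.hasDerivAt.mul hcomp)
  have hsq : D * (r * (r ^ 2 + p ^ 2 * H)) = (p - r * q) ^ 2 + (r * p * w) ^ 2 :=
    jacobian_deriv_mul_eq_sq_add_sq hr.ne' (by linear_combination hG.unique hEL)
  rw [hd.deriv]
  have hfactor : 0 < r * (r ^ 2 + p ^ 2 * H) := by positivity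
  exact pos_of_mul_pos_left (hsq ▸ by positivity) hfactor.le

theorem jacobian_strictly_increasing_general (a b ω : ℝ) (ha : 0 < a)
    (hω : ω ≠ 0) (ρ ψ h₀ : ℝ → ℝ)
    (hρ : ContDiffOn ℝ 2 ρ (Set.Ioo a b))
    (hρpos : ∀ r ∈ Set.Ioo a b, 0 < ρ r)
    (hh₀ : ContDiffOn ℝ 2 h₀ (Set.Ioi 0)) (hconv : ConvexOn ℝ (Set.Ioi 0) h₀)
    (hdpos : ∀ r ∈ Set.Ioo a b, 0 < ρ r * deriv ρ r / r)
    (hang : ∀ r ∈ Set.Ioo a b, r * (ρ r) ^ 2 * deriv ψ r = ω)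
    (hEL : ∀ r ∈ Set.Ioo a b,
      HasDerivAt (fun s => s * deriv ρ s + ρ s * deriv h₀ (ρ s * deriv ρ s / s))
        (ρ r / r + r * ρ r * (deriv ψ r) ^ 2
          + deriv ρ r * deriv h₀ (ρ r * deriv ρ r / r)) r) :
    (∀ r ∈ Set.Ioo a b, 0 < deriv (fun s => ρ s * deriv ρ s / s) r)
    ∧ StrictMonoOn (fun s => ρ s * deriv ρ s / s) (Set.Ioo a b) := by
  have hρ' : ContDiffOn ℝ 1 (deriv ρ) (Ioo a b) := hρ.deriv_of_isOpen isOpen_Ioo (by norm_num)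
  have hh₀' : ContDiffOn ℝ 1 (deriv h₀) (Ioi 0) := hh₀.deriv_of_isOpen isOpen_Ioi (by norm_num)
  have hderiv_pos : ∀ r ∈ Ioo a b, 0 < deriv (fun s => ρ s * deriv ρ s / s) r := by
    intro r hr
    have hψ' : deriv ψ r ≠ 0 := fun h ↦ hω (by rw [← hang r hr, h, mul_zero])
    have hr_nhds : Ioo a b ∈ nhds r := isOpen_Ioo.mem_nhds hr
    have hd_nhds : Ioi 0 ∈ nhds (ρ r * deriv ρ r / r) := isOpen_Ioi.mem_nhds (hdpos r hr)
    exact deriv_jacobian_pos (ha.trans hr.1) (hρpos r hr) hψ'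
      ((hρ.differentiableOn (by norm_num)).differentiableAt hr_nhds)
      ((hρ'.differentiableOn one_ne_zero).differentiableAt hr_nhds)
      ((hh₀'.differentiableOn one_ne_zero).differentiableAt hd_nhds)
      (hconv.deriv_deriv_nonneg isOpen_Ioi (hh₀.differentiableOn (by norm_num)) (hdpos r hr))
      (hEL r hr)
  refine ⟨hderiv_pos, strictMonoOn_of_deriv_pos (convex_Ioo a b) ?_ ?_⟩
  · exact (hρ.continuousOn.mul hρ'.continuousOn).div continuousOn_id
      fun x hx ↦ (ha.trans hx.1).ne'
  · simpa only [interior_Ioo] using hderiv_pos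

/-- Lemma 8 (first part): for a rotationally symmetric solution of the
Euler–Lagrange equations with stored energy `½|F|² + h₀(det F)`, the Jacobian
`d = ρρ̇/r` is strictly monotonically increasing; in particular `ḋ ≤ 0` is
impossible at any point of `(a,b)`. -/
theorem jacobian_strictly_increasing (a b ω : ℝ) (ha : 0 < a) (hab : a < b)
    (hω : ω ≠ 0) (ρ ψ h₀ : ℝ → ℝ)
    (hρ : ContDiffOn ℝ 2 ρ (Set.Ioo a b)) (hψ : ContDiffOn ℝ 2 ψ (Set.Ioo a b))
    (hρpos : ∀ r ∈ Set.Ioo a b, 0 < ρ r)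
    (hh₀ : ContDiffOn ℝ 2 h₀ (Set.Ioi 0)) (hconv : ConvexOn ℝ (Set.Ioi 0) h₀)
    (hdpos : ∀ r ∈ Set.Ioo a b, 0 < ρ r * deriv ρ r / r)
    (hang : ∀ r ∈ Set.Ioo a b, r * (ρ r) ^ 2 * deriv ψ r = ω)
    (hEL : ∀ r ∈ Set.Ioo a b,
      HasDerivAt (fun s => s * deriv ρ s + ρ s * deriv h₀ (ρ s * deriv ρ s / s))
        (ρ r / r + r * ρ r * (deriv ψ r) ^ 2
          + deriv ρ r * deriv h₀ (ρ r * deriv ρ r / r)) r) :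
    (∀ r ∈ Set.Ioo a b, 0 < deriv (fun s => ρ s * deriv ρ s / s) r)
    ∧ StrictMonoOn (fun s => ρ s * deriv ρ s / s) (Set.Ioo a b) :=
  jacobian_strictly_increasing_general a b ω ha hω ρ ψ h₀ hρ hρpos hh₀ hconv hdpos hang hEL
end

section
/- Under the same hypotheses, z(r) := ½(ρ̇² + ω²/(r²ρ²) − ρ²/r²) + f(d) + ρ²/r², with f(s) = s h₀'(s) − h₀(s), satisfies ż(r) = −(1/r)[(ρ̇ − ρ/r)² + ω²/(r²ρ²)] < 0, so z is strictly decreasing on (a,b). -/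
/-!
Write `d = ρρ̇/r` and `w = h₀'(d)`. By the product and chain rules `(f ∘ d)' = d w'`, and the
Euler–Lagrange equation determines `ρ w'` in terms of `ρ, ρ̇, ρ̈, ψ̇`. Substituting this and
`ψ̇ = ω/(rρ²)` into `ż`, all second derivatives cancel and what remains is
`-(1/r)[(ρ̇ - ρ/r)² + ω²/(r²ρ²)]`, which is negative because `ω ≠ 0`.
-/

open Set

theorem ContDiffOn.differentiableAt_deriv {𝕜 F : Type*} [NontriviallyNormedField 𝕜]
    [NormedAddCommGroup F] [NormedSpace 𝕜 F] {f : 𝕜 → F} {s : Set 𝕜} {x : 𝕜}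
    (hf : ContDiffOn 𝕜 2 f s) (hs : IsOpen s) (hx : x ∈ s) :
    DifferentiableAt 𝕜 (deriv f) x :=
  ((hf.deriv_of_isOpen hs le_rfl).differentiableOn one_ne_zero).differentiableAt
    (hs.mem_nhds hx)

theorem hasDerivAt_mul_deriv_comp_sub_comp {h u : ℝ → ℝ} {u' w' x : ℝ}
    (hu : HasDerivAt u u' x) (hh : DifferentiableAt ℝ h (u x))
    (hw : HasDerivAt (fun s => deriv h (u s)) w' x) :
    HasDerivAt (fun s => u s * deriv h (u s) - h (u s)) (u x * w') x := by
  refine ((hu.mul hw).sub (hh.hasDerivAt.comp x hu)).congr_deriv ?_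
  rw [mul_comm u', add_sub_cancel_left]

noncomputable def radialEnergy (ρ h₀ : ℝ → ℝ) (ω s : ℝ) : ℝ :=
  (1 / 2) * ((deriv ρ s) ^ 2 + ω ^ 2 / (s ^ 2 * (ρ s) ^ 2) - (ρ s) ^ 2 / s ^ 2)
    + ((ρ s * deriv ρ s / s) * deriv h₀ (ρ s * deriv ρ s / s) - h₀ (ρ s * deriv ρ s / s))
    + (ρ s) ^ 2 / s ^ 2

theorem hasDerivAt_radialEnergy {ρ h₀ : ℝ → ℝ} {ω ψ' ρ'' r : ℝ} (hr : 0 < r)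
    (hρr : 0 < ρ r) (hρ : DifferentiableAt ℝ ρ r) (hρ' : HasDerivAt (deriv ρ) ρ'' r)
    (hh : DifferentiableAt ℝ h₀ (ρ r * deriv ρ r / r))
    (hh' : DifferentiableAt ℝ (deriv h₀) (ρ r * deriv ρ r / r))
    (hang : r * (ρ r) ^ 2 * ψ' = ω)
    (hEL : HasDerivAt (fun s => s * deriv ρ s + ρ s * deriv h₀ (ρ s * deriv ρ s / s))
      (ρ r / r + r * ρ r * ψ' ^ 2 + deriv ρ r * deriv h₀ (ρ r * deriv ρ r / r)) r) :
    HasDerivAt (radialEnergy ρ h₀ ω)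
      (-(1 / r) * ((deriv ρ r - ρ r / r) ^ 2 + ω ^ 2 / (r ^ 2 * (ρ r) ^ 2))) r := by
  replace hρ := hρ.hasDerivAt
  obtain ⟨d', hd⟩ : ∃ d', HasDerivAt (fun s => ρ s * deriv ρ s / s) d' r :=
    ⟨_, (hρ.mul hρ').div (hasDerivAt_id r) hr.ne'⟩
  obtain ⟨w', hw⟩ : ∃ w', HasDerivAt (fun s => deriv h₀ (ρ s * deriv ρ s / s)) w' r :=
    ⟨_, hh'.hasDerivAt.comp (h := fun s => ρ s * deriv ρ s / s) r hd⟩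
  have hw' : w' = (ρ r / r + r * ρ r * ψ' ^ 2 - deriv ρ r - r * ρ'') / ρ r := by
    have := hEL.unique (((hasDerivAt_id' r).mul hρ').add (hρ.mul hw))
    rw [eq_div_iff hρr.ne']
    linarith
  have hr2 : r ^ 2 ≠ 0 := by positivity
  have hz := (((((hρ'.pow 2).add ((hasDerivAt_const r (ω ^ 2)).div
      ((hasDerivAt_pow 2 r).mul (hρ.pow 2)) (mul_ne_zero hr2 (pow_ne_zero 2 hρr.ne')))).sub
      ((hρ.pow 2).div (hasDerivAt_pow 2 r) hr2)).const_mul (1 / 2 : ℝ)).add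
      (hasDerivAt_mul_deriv_comp_sub_comp hd hh hw)).add
      ((hρ.pow 2).div (hasDerivAt_pow 2 r) hr2)
  refine hz.congr_deriv ?_
  subst hang
  rw [hw']
  simp only [Pi.mul_apply, Pi.pow_apply]
  field_simp
  ring

theorem z_strictly_decreasing_general (a b ω : ℝ) (ha : 0 < a)
    (hω : ω ≠ 0) (ρ ψ h₀ : ℝ → ℝ)
    (hρ : ContDiffOn ℝ 2 ρ (Set.Ioo a b))
    (hρpos : ∀ r ∈ Set.Ioo a b, 0 < ρ r)
    (hh₀ : ContDiffOn ℝ 2 h₀ (Set.Ioi 0))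
    (hdpos : ∀ r ∈ Set.Ioo a b, 0 < ρ r * deriv ρ r / r)
    (hang : ∀ r ∈ Set.Ioo a b, r * (ρ r) ^ 2 * deriv ψ r = ω)
    (hEL : ∀ r ∈ Set.Ioo a b,
      HasDerivAt (fun s => s * deriv ρ s + ρ s * deriv h₀ (ρ s * deriv ρ s / s))
        (ρ r / r + r * ρ r * (deriv ψ r) ^ 2
          + deriv ρ r * deriv h₀ (ρ r * deriv ρ r / r)) r) :
    (∀ r ∈ Set.Ioo a b,
      deriv (fun s => (1 / 2) * ((deriv ρ s) ^ 2 + ω ^ 2 / (s ^ 2 * (ρ s) ^ 2)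
          - (ρ s) ^ 2 / s ^ 2)
        + ((ρ s * deriv ρ s / s) * deriv h₀ (ρ s * deriv ρ s / s)
            - h₀ (ρ s * deriv ρ s / s))
        + (ρ s) ^ 2 / s ^ 2) r
      = -(1 / r) * ((deriv ρ r - ρ r / r) ^ 2 + ω ^ 2 / (r ^ 2 * (ρ r) ^ 2))
      ∧ deriv (fun s => (1 / 2) * ((deriv ρ s) ^ 2 + ω ^ 2 / (s ^ 2 * (ρ s) ^ 2)
          - (ρ s) ^ 2 / s ^ 2)
        + ((ρ s * deriv ρ s / s) * deriv h₀ (ρ s * deriv ρ s / s)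
            - h₀ (ρ s * deriv ρ s / s))
        + (ρ s) ^ 2 / s ^ 2) r < 0)
    ∧ StrictAntiOn (fun s => (1 / 2) * ((deriv ρ s) ^ 2 + ω ^ 2 / (s ^ 2 * (ρ s) ^ 2)
          - (ρ s) ^ 2 / s ^ 2)
        + ((ρ s * deriv ρ s / s) * deriv h₀ (ρ s * deriv ρ s / s)
            - h₀ (ρ s * deriv ρ s / s))
        + (ρ s) ^ 2 / s ^ 2) (Set.Ioo a b) := by
  have hz : ∀ r ∈ Ioo a b, HasDerivAt (radialEnergy ρ h₀ ω)
      (-(1 / r) * ((deriv ρ r - ρ r / r) ^ 2 + ω ^ 2 / (r ^ 2 * (ρ r) ^ 2))) r := by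
    intro r hr
    have hd : ρ r * deriv ρ r / r ∈ Ioi 0 := hdpos r hr
    exact hasDerivAt_radialEnergy (ha.trans hr.1) (hρpos r hr)
      ((hρ.differentiableOn two_ne_zero).differentiableAt (isOpen_Ioo.mem_nhds hr))
      (hρ.differentiableAt_deriv isOpen_Ioo hr).hasDerivAt
      ((hh₀.differentiableOn two_ne_zero).differentiableAt (isOpen_Ioi.mem_nhds hd))
      (hh₀.differentiableAt_deriv isOpen_Ioi hd) (hang r hr) (hEL r hr)
  have hneg : ∀ r ∈ Ioo a b,
      -(1 / r) * ((deriv ρ r - ρ r / r) ^ 2 + ω ^ 2 / (r ^ 2 * (ρ r) ^ 2)) < 0 := by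
    intro r hr
    have hr0 : 0 < r := ha.trans hr.1
    have := hρpos r hr
    exact mul_neg_of_neg_of_pos (neg_neg_of_pos (one_div_pos.mpr hr0)) (by positivity)
  refine ⟨fun r hr => ⟨(hz r hr).deriv, (hz r hr).deriv ▸ hneg r hr⟩, ?_⟩
  refine strictAntiOn_of_deriv_neg (convex_Ioo a b)
    (fun r hr => (hz r hr).continuousAt.continuousWithinAt) fun r hr => ?_
  rw [interior_Ioo] at hr
  exact (hz r hr).deriv ▸ hneg r hr

/-- Lemma 8 (second part): with `f(s) = s h₀'(s) − h₀(s)`, the function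
`z = ½(ρ̇² + ω²/(r²ρ²) − ρ²/r²) + f(d) + ρ²/r²` satisfies
`ż = −(1/r)[(ρ̇ − ρ/r)² + ω²/(r²ρ²)] < 0`, hence is strictly decreasing
on `(a,b)`. -/
theorem z_strictly_decreasing (a b ω : ℝ) (ha : 0 < a) (hab : a < b)
    (hω : ω ≠ 0) (ρ ψ h₀ : ℝ → ℝ)
    (hρ : ContDiffOn ℝ 2 ρ (Set.Ioo a b)) (hψ : ContDiffOn ℝ 2 ψ (Set.Ioo a b))
    (hρpos : ∀ r ∈ Set.Ioo a b, 0 < ρ r)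
    (hh₀ : ContDiffOn ℝ 2 h₀ (Set.Ioi 0)) (hconv : ConvexOn ℝ (Set.Ioi 0) h₀)
    (hdpos : ∀ r ∈ Set.Ioo a b, 0 < ρ r * deriv ρ r / r)
    (hang : ∀ r ∈ Set.Ioo a b, r * (ρ r) ^ 2 * deriv ψ r = ω)
    (hEL : ∀ r ∈ Set.Ioo a b,
      HasDerivAt (fun s => s * deriv ρ s + ρ s * deriv h₀ (ρ s * deriv ρ s / s))
        (ρ r / r + r * ρ r * (deriv ψ r) ^ 2
          + deriv ρ r * deriv h₀ (ρ r * deriv ρ r / r)) r) :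
    (∀ r ∈ Set.Ioo a b,
      deriv (fun s => (1 / 2) * ((deriv ρ s) ^ 2 + ω ^ 2 / (s ^ 2 * (ρ s) ^ 2)
          - (ρ s) ^ 2 / s ^ 2)
        + ((ρ s * deriv ρ s / s) * deriv h₀ (ρ s * deriv ρ s / s)
            - h₀ (ρ s * deriv ρ s / s))
        + (ρ s) ^ 2 / s ^ 2) r
      = -(1 / r) * ((deriv ρ r - ρ r / r) ^ 2 + ω ^ 2 / (r ^ 2 * (ρ r) ^ 2))
      ∧ deriv (fun s => (1 / 2) * ((deriv ρ s) ^ 2 + ω ^ 2 / (s ^ 2 * (ρ s) ^ 2)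
          - (ρ s) ^ 2 / s ^ 2)
        + ((ρ s * deriv ρ s / s) * deriv h₀ (ρ s * deriv ρ s / s)
            - h₀ (ρ s * deriv ρ s / s))
        + (ρ s) ^ 2 / s ^ 2) r < 0)
    ∧ StrictAntiOn (fun s => (1 / 2) * ((deriv ρ s) ^ 2 + ω ^ 2 / (s ^ 2 * (ρ s) ^ 2)
          - (ρ s) ^ 2 / s ^ 2)
        + ((ρ s * deriv ρ s / s) * deriv h₀ (ρ s * deriv ρ s / s)
            - h₀ (ρ s * deriv ρ s / s))
        + (ρ s) ^ 2 / s ^ 2) (Set.Ioo a b) :=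
  z_strictly_decreasing_general a b ω ha hω ρ ψ h₀ hρ hρpos hh₀ hdpos hang hEL
end

section
/- Let ρ be C² on (a,b) with d = ρρ̇/r strictly increasing and ρ > 0. Then the function r ↦ ρ(r)/r attains no interior local maximum: there is no r ∈ (a,b) with (ρ/r)'(r) = 0 and (ρ/r)''(r) ≤ 0. -/
/-!
At a critical point of `ρ/r` we have `ρ̇ r = ρ`. Substituting this into the second derivative of
`ρ/r` and into the derivative of `d = ρρ̇/r` collapses them to `ρ̈/r` and `ρρ̈/r` respectively.
Since `ρ > 0`, the first is `≤ 0` exactly when the second is, contradicting `ḋ > 0`.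
-/

open Filter Topology

namespace Real

variable {f : ℝ → ℝ} {x : ℝ}

theorem hasDerivAt_div_id {f' : ℝ} (hf : HasDerivAt f f' x) (hx : x ≠ 0) :
    HasDerivAt (fun s => f s / s) ((f' * x - f x) / x ^ 2) x := by
  simpa using hf.fun_div (hasDerivAt_id x) hx

theorem deriv_div_id (hf : DifferentiableAt ℝ f x) (hx : x ≠ 0) :
    deriv (fun s => f s / s) x = (deriv f x * x - f x) / x ^ 2 :=
  (hasDerivAt_div_id hf.hasDerivAt hx).deriv

theorem deriv_div_id_eq_zero_iff (hf : DifferentiableAt ℝ f x) (hx : x ≠ 0) :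
    deriv (fun s => f s / s) x = 0 ↔ deriv f x * x = f x := by
  rw [deriv_div_id hf hx, div_eq_zero_iff, sub_eq_zero]
  simp [hx]

theorem deriv_deriv_div_id_of_deriv_mul_eq (hf : ∀ᶠ s in 𝓝 x, DifferentiableAt ℝ f s)
    (hf' : DifferentiableAt ℝ (deriv f) x) (hx : x ≠ 0) (hcrit : deriv f x * x = f x) :
    deriv (deriv fun s => f s / s) x = deriv (deriv f) x / x := by
  have hfirst : deriv (fun s => f s / s) =ᶠ[𝓝 x] fun s => (deriv f s * s - f s) / s ^ 2 := by
    filter_upwards [hf, eventually_ne_nhds hx] with s hs hs0 using deriv_div_id hs hs0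
  have hnum : HasDerivAt (fun s => deriv f s * s - f s) (deriv (deriv f) x * x) x := by
    simpa using (hf'.hasDerivAt.fun_mul (hasDerivAt_id x)).fun_sub hf.self_of_nhds.hasDerivAt
  have hquot := hnum.fun_div (hasDerivAt_pow 2 x) (pow_ne_zero 2 hx)
  rw [hfirst.deriv_eq, hquot.deriv, hcrit]
  field_simp
  ring

theorem deriv_mul_deriv_div_id_of_deriv_mul_eq (hf : DifferentiableAt ℝ f x)
    (hf' : DifferentiableAt ℝ (deriv f) x) (hx : x ≠ 0) (hcrit : deriv f x * x = f x) :
    deriv (fun s => f s * deriv f s / s) x = f x * deriv (deriv f) x / x := by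
  rw [(hasDerivAt_div_id (hf.hasDerivAt.fun_mul hf'.hasDerivAt) hx).deriv]
  field_simp
  linear_combination deriv f x * hcrit

end Real

theorem no_interior_local_max_general (a b : ℝ) (ha : 0 < a) (ρ : ℝ → ℝ)
    (hρ : ContDiffOn ℝ 2 ρ (Set.Ioo a b))
    (hρpos : ∀ r ∈ Set.Ioo a b, 0 < ρ r)
    (hd : ∀ r ∈ Set.Ioo a b, 0 < deriv (fun s => ρ s * deriv ρ s / s) r) :
    ¬ ∃ r ∈ Set.Ioo a b,
      deriv (fun s => ρ s / s) r = 0 ∧ deriv (deriv (fun s => ρ s / s)) r ≤ 0 := by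
  rintro ⟨r, hr, hcrit, hsecond⟩
  have hr0 : r ≠ 0 := (ha.trans hr.1).ne'
  have hρdiff : ∀ᶠ s in 𝓝 r, DifferentiableAt ℝ ρ s := by
    filter_upwards [isOpen_Ioo.mem_nhds hr] with s hs
    exact (hρ.contDiffAt (isOpen_Ioo.mem_nhds hs)).differentiableAt two_ne_zero
  have hρ'diff : DifferentiableAt ℝ (deriv ρ) r :=
    ((hρ.deriv_of_isOpen isOpen_Ioo (by norm_num)).contDiffAt
      (isOpen_Ioo.mem_nhds hr)).differentiableAt one_ne_zero
  have hcrit' := (Real.deriv_div_id_eq_zero_iff hρdiff.self_of_nhds hr0).mp hcrit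
  rw [Real.deriv_deriv_div_id_of_deriv_mul_eq hρdiff hρ'diff hr0 hcrit'] at hsecond
  have hdr := hd r hr
  rw [Real.deriv_mul_deriv_div_id_of_deriv_mul_eq hρdiff.self_of_nhds hρ'diff hr0 hcrit',
    mul_div_assoc] at hdr
  exact (mul_nonpos_of_nonneg_of_nonpos (hρpos r hr).le hsecond).not_gt hdr

/-- Theorem 10 (no interior local maximum): if `ρ > 0` is `C²` on `(a,b)` and
`d = ρρ̇/r` is strictly increasing (`ḋ > 0`), then `ρ/r` has no interior point
with `(ρ/r)' = 0` and `(ρ/r)'' ≤ 0`. -/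
theorem no_interior_local_max (a b : ℝ) (ha : 0 < a) (hab : a < b) (ρ : ℝ → ℝ)
    (hρ : ContDiffOn ℝ 2 ρ (Set.Ioo a b))
    (hρpos : ∀ r ∈ Set.Ioo a b, 0 < ρ r)
    (hd : ∀ r ∈ Set.Ioo a b, 0 < deriv (fun s => ρ s * deriv ρ s / s) r) :
    ¬ ∃ r ∈ Set.Ioo a b,
      deriv (fun s => ρ s / s) r = 0 ∧ deriv (deriv (fun s => ρ s / s)) r ≤ 0 :=
  no_interior_local_max_general a b ha ρ hρ hρpos hd
end
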